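/- Fix a real b > 1. There exists a constant C > 0 (depending only on b) such that for every a ∈ (0, 1], every E ≥ 1, and every x ∈ [−E, E], the NBP marginal density with σ² = 1 satisfies g_{a,b}(x) ≥ C · a · E^{−(2b+1)}. -/

import Mathlib

open Real MeasureTheory

/-- The (standardized, σ² = 1) NBP marginal density, as an extended-real-valued
integral (so that the pole at `x = 0` when `a ≤ 1/2` is the value `∞`). -/
noncomputable def nbpMarginal (a b : ℝ) (x : ℝ) : ENNReal :=
  ∫⁻ t in Set.Ioi (0 : ℝ),
    ENNReal.ofReal ((Real.Gamma (a + b) / (Real.Gamma a * Real.Gamma b)) *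
      ((2 * π * t) ^ (-(1 / 2 : ℝ)) * Real.exp (-x ^ 2 / (2 * t)) *
        t ^ (a - 1) * (1 + t) ^ (-(a + b))))

/-!
On the window `t ∈ (E², 2E²]` the Gaussian factor is at least `e^{-1/2}` and, the `t^a` factors
cancelling up to `(1 + t)^a ≤ (2t)^a`, the integrand is of order `t^{-(b + 3/2)}` there; the window
has length `E²`, which gives `E^{-(2b+1)}`. The normalising constant `Γ(a+b) / (Γ(a) Γ(b))` is at
least `a · min Γ / Γ(b)`, because `a Γ(a) = Γ(a+1) ≤ 1` by convexity of `Γ` on `[1, 2]`.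
-/

open Set

namespace Real

lemma exists_pos_forall_le_Gamma : ∃ m > 0, ∀ s > 0, m ≤ Gamma s := by
  obtain ⟨x₀, hx₀, hmin⟩ := exists_isMinOn_Gamma_Ioi
  exact ⟨Gamma x₀, Gamma_pos_of_pos (by linarith [hx₀.1]), fun s hs => hmin (mem_Ioi.2 hs)⟩

lemma Gamma_add_one_le_one {a : ℝ} (ha : 0 ≤ a) (ha1 : a ≤ 1) : Gamma (a + 1) ≤ 1 := by
  have := convexOn_Gamma.le_max_of_mem_Icc (x := 1) (y := 2) (z := a + 1)
    (by norm_num) (by norm_num) ⟨by linarith, by linarith⟩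
  simpa [Gamma_one, Gamma_two] using this

lemma Gamma_le_inv {a : ℝ} (ha : 0 < a) (ha1 : a ≤ 1) : Gamma a ≤ a⁻¹ := by
  rw [← one_div, le_div_iff₀' ha, ← Gamma_add_one ha.ne']
  exact Gamma_add_one_le_one ha.le ha1

lemma mul_Gamma_add_div_le_Gamma_add_div_mul {a b : ℝ} (ha : 0 < a) (ha1 : a ≤ 1) (hb : 0 < b) :
    a * Gamma (a + b) / Gamma b ≤ Gamma (a + b) / (Gamma a * Gamma b) := by
  have hGab : 0 ≤ Gamma (a + b) := (Gamma_pos_of_pos (by linarith)).le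
  calc a * Gamma (a + b) / Gamma b = Gamma (a + b) / (a⁻¹ * Gamma b) := by
        field_simp
    _ ≤ Gamma (a + b) / (Gamma a * Gamma b) := by
        gcongr
        exact Gamma_le_inv ha ha1

lemma two_rpow_mul_rpow_le_rpow_mul_one_add_rpow {a b t : ℝ} (ha1 : a ≤ 1) (hab : 0 ≤ a + b)
    (ht : 1 ≤ t) : 2 ^ (-(1 + b)) * t ^ (-(1 + b)) ≤ t ^ (a - 1) * (1 + t) ^ (-(a + b)) := by
  have ht0 : 0 < t := by linarith
  calc 2 ^ (-(1 + b)) * t ^ (-(1 + b)) ≤ 2 ^ (-(a + b)) * t ^ (-(1 + b)) := by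
        gcongr
        linarith
    _ = t ^ (a - 1) * (2 * t) ^ (-(a + b)) := by
        rw [mul_rpow zero_le_two ht0.le, show -(1 + b) = (a - 1) + -(a + b) by ring,
          rpow_add ht0]
        ring
    _ ≤ t ^ (a - 1) * (1 + t) ^ (-(a + b)) := by
        gcongr t ^ (a - 1) * ?_
        exact rpow_le_rpow_of_nonpos (by linarith) (by linarith) (by linarith)

lemma two_mul_sq_rpow_mul_sq {E : ℝ} (hE : 0 < E) (b : ℝ) :
    (2 * E ^ 2) ^ (-(b + 3 / 2)) * E ^ 2 = 2 ^ (-(b + 3 / 2)) * E ^ (-(2 * b + 1)) := by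
  rw [mul_rpow zero_le_two (by positivity), ← rpow_natCast E 2, ← rpow_mul hE.le, mul_assoc,
    ← rpow_add hE]
  congr 2
  push_cast
  ring

end Real

noncomputable def nbpKernel (a b x t : ℝ) : ℝ :=
  (2 * π * t) ^ (-(1 / 2 : ℝ)) * exp (-x ^ 2 / (2 * t)) * t ^ (a - 1) * (1 + t) ^ (-(a + b))

lemma nbpMarginal_eq_lintegral_nbpKernel (a b x : ℝ) :
    nbpMarginal a b x = ∫⁻ t in Ioi 0,
      ENNReal.ofReal (Gamma (a + b) / (Gamma a * Gamma b) * nbpKernel a b x t) :=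
  rfl

lemma rpow_le_nbpKernel {a b x t : ℝ} (ha1 : a ≤ 1) (hab : 0 ≤ a + b) (ht : 1 ≤ t)
    (hx : x ^ 2 ≤ t) :
    (2 * π) ^ (-(1 / 2 : ℝ)) * exp (-(1 / 2)) * 2 ^ (-(1 + b)) * t ^ (-(b + 3 / 2)) ≤
      nbpKernel a b x t := by
  have ht0 : 0 < t := by linarith
  have hgauss : exp (-(1 / 2)) ≤ exp (-x ^ 2 / (2 * t)) := by
    rw [exp_le_exp, neg_div, neg_le_neg_iff, div_le_iff₀ (by positivity)]
    linarith
  have hpow := two_rpow_mul_rpow_le_rpow_mul_one_add_rpow ha1 hab ht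
  calc (2 * π) ^ (-(1 / 2 : ℝ)) * exp (-(1 / 2)) * 2 ^ (-(1 + b)) * t ^ (-(b + 3 / 2))
      = ((2 * π) ^ (-(1 / 2 : ℝ)) * t ^ (-(1 / 2 : ℝ))) * exp (-(1 / 2)) *
          (2 ^ (-(1 + b)) * t ^ (-(1 + b))) := by
        rw [show -(b + 3 / 2) = -(1 / 2 : ℝ) + -(1 + b) by ring, rpow_add ht0]
        ring
    _ ≤ (2 * π * t) ^ (-(1 / 2 : ℝ)) * exp (-x ^ 2 / (2 * t)) *
          (t ^ (a - 1) * (1 + t) ^ (-(a + b))) := by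
        rw [mul_rpow (by positivity) ht0.le]
        gcongr
    _ = nbpKernel a b x t := by
        rw [nbpKernel]
        ring

lemma ofReal_mul_le_nbpMarginal {a b x K u : ℝ} (hu : 0 < u)
    (hK : ∀ t ∈ Ioc u (2 * u), K ≤ Gamma (a + b) / (Gamma a * Gamma b) * nbpKernel a b x t) :
    ENNReal.ofReal (K * u) ≤ nbpMarginal a b x := by
  rw [nbpMarginal_eq_lintegral_nbpKernel]
  calc ENNReal.ofReal (K * u) = ∫⁻ _ in Ioc u (2 * u), ENNReal.ofReal K := by
        rw [setLIntegral_const, volume_Ioc, ENNReal.ofReal_mul' hu.le]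
        ring_nf
    _ ≤ ∫⁻ t in Ioc u (2 * u),
          ENNReal.ofReal (Gamma (a + b) / (Gamma a * Gamma b) * nbpKernel a b x t) :=
        setLIntegral_mono' measurableSet_Ioc
          fun t ht => ENNReal.ofReal_le_ofReal (hK t ht)
    _ ≤ _ := lintegral_mono_set fun t ht => hu.trans ht.1

theorem nbp_marginal_uniform_lower_bound (b : ℝ) (hb : 1 < b) :
    ∃ C : ℝ, 0 < C ∧ ∀ a : ℝ, 0 < a → a ≤ 1 → ∀ E : ℝ, 1 ≤ E → ∀ x : ℝ, |x| ≤ E →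
      ENNReal.ofReal (C * a * E ^ (-(2 * b + 1))) ≤ nbpMarginal a b x := by
  obtain ⟨m, hm, hm_le⟩ := exists_pos_forall_le_Gamma
  have hΓb : 0 < Gamma b := Gamma_pos_of_pos (by linarith)
  set c := (2 * π) ^ (-(1 / 2 : ℝ)) * exp (-(1 / 2)) * 2 ^ (-(1 + b))
  refine ⟨m / Gamma b * c * 2 ^ (-(b + 3 / 2)), by positivity, fun a ha ha1 E hE x hx => ?_⟩
  have hE0 : 0 < E := by linarith
  have hsplit : m / Gamma b * c * 2 ^ (-(b + 3 / 2)) * a * E ^ (-(2 * b + 1)) =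
      a * m / Gamma b * (c * (2 * E ^ 2) ^ (-(b + 3 / 2))) * E ^ 2 := by
    rw [mul_assoc _ (c * _), mul_assoc c, two_mul_sq_rpow_mul_sq hE0]
    ring
  rw [hsplit]
  refine ofReal_mul_le_nbpMarginal (by positivity) fun t ht => ?_
  have ht1 : 1 ≤ t := by nlinarith [ht.1]
  have hxt : x ^ 2 ≤ t := by nlinarith [sq_abs x, abs_nonneg x, ht.1]
  gcongr ?_ * ?_
  · calc a * m / Gamma b ≤ a * Gamma (a + b) / Gamma b := by
          gcongr
          exact hm_le _ (by linarith)
      _ ≤ _ := mul_Gamma_add_div_le_Gamma_add_div_mul ha ha1 (by linarith)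
  · calc c * (2 * E ^ 2) ^ (-(b + 3 / 2)) ≤ c * t ^ (-(b + 3 / 2)) := by
          gcongr c * ?_
          exact rpow_le_rpow_of_nonpos (by linarith) ht.2 (by linarith)
      _ ≤ nbpKernel a b x t := rpow_le_nbpKernel ha1 (by linarith) ht1 hxt
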